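/- arXiv:0802.4060 — 6 statements merged into one kernel-verified Lean document; each statement's English description precedes it below -/
import Mathlib

section
/- (Proposition 1, equation (29): pathwise decomposition of simultaneous ruin.) The 'sim' ruin event (∃ t ≥ 0 with X1(t) < 0 and X2(t) < 0) holds if and only if either A := (∃ t ∈ [0,T] with X2(t) < 0) holds or B := ((∀ t ∈ [0,T], X2(t) ≥ 0) and (∃ t > T with X1(t) < 0)) holds; moreover A and B are mutually exclusive. Consequently, if S is a stochastic process on a probability space (Ω, F, P) for which these events are measurable, then ψ_sim(x1,x2) := P(∃ t ≥ 0 : X1(t) < 0 and X2(t) < 0) = P(A) + P(B). -/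
open MeasureTheory

/-- Proposition 1, equation (29): pathwise decomposition of simultaneous ruin. -/
theorem sim_ruin_decomposition
    {Ω : Type*} [MeasurableSpace Ω] (P : Measure Ω) [IsProbabilityMeasure P]
    (p1 p2 x1 x2 T : ℝ) (hp : p2 < p1) (hx : x1 < x2)
    (hT : T = (x2 - x1) / (p1 - p2))
    (S : Ω → ℝ → ℝ) (X1 X2 : Ω → ℝ → ℝ)
    (hX1 : ∀ ω t, X1 ω t = x1 + p1 * t - S ω t)
    (hX2 : ∀ ω t, X2 ω t = x2 + p2 * t - S ω t)
    (A B : Set Ω)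
    (hA : A = {ω | ∃ t, 0 ≤ t ∧ t ≤ T ∧ X2 ω t < 0})
    (hB : B = {ω | (∀ t, 0 ≤ t → t ≤ T → 0 ≤ X2 ω t) ∧ ∃ t, T < t ∧ X1 ω t < 0})
    (hAmeas : MeasurableSet A) (hBmeas : MeasurableSet B)
    (hSimMeas : MeasurableSet {ω | ∃ t, 0 ≤ t ∧ X1 ω t < 0 ∧ X2 ω t < 0}) :
    (∀ ω, (∃ t, 0 ≤ t ∧ X1 ω t < 0 ∧ X2 ω t < 0) ↔ (ω ∈ A ∨ ω ∈ B)) ∧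
    (∀ ω, ¬(ω ∈ A ∧ ω ∈ B)) ∧
    P {ω | ∃ t, 0 ≤ t ∧ X1 ω t < 0 ∧ X2 ω t < 0} = P A + P B := by
  have hpdiff : 0 < p1 - p2 := by linarith
  have hTval : x2 - x1 = T * (p1 - p2) := by
    rw [hT]; field_simp
  have hT0 : 0 < T := by
    rw [hT]; exact div_pos (by linarith) hpdiff
  -- X1 ≤ X2 for t ≤ T, X2 ≤ X1 for T ≤ t
  have hle1 : ∀ ω t, t ≤ T → X1 ω t ≤ X2 ω t := by
    intro ω t ht
    rw [hX1, hX2]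
    nlinarith [mul_le_mul_of_nonneg_left ht hpdiff.le]
  have hle2 : ∀ ω t, T ≤ t → X2 ω t ≤ X1 ω t := by
    intro ω t ht
    rw [hX1, hX2]
    nlinarith [mul_le_mul_of_nonneg_left ht hpdiff.le]
  have hiff : ∀ ω, (∃ t, 0 ≤ t ∧ X1 ω t < 0 ∧ X2 ω t < 0) ↔ (ω ∈ A ∨ ω ∈ B) := by
    intro ω
    constructor
    · rintro ⟨t, ht0, h1, h2⟩
      by_cases hAω : ω ∈ A
      · exact Or.inl hAω
      · refine Or.inr ?_
        rw [hB]
        rw [hA] at hAω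
        simp only [Set.mem_setOf_eq] at hAω
        push_neg at hAω
        constructor
        · intro s hs0 hsT
          exact hAω s hs0 hsT
        · refine ⟨t, ?_, h1⟩
          by_contra hnt
          push_neg at hnt
          exact absurd h2 (not_lt.mpr (hAω t ht0 hnt))
    · rintro (hAω | hBω)
      · rw [hA] at hAω
        obtain ⟨t, ht0, htT, h2⟩ := hAω
        exact ⟨t, ht0, lt_of_le_of_lt (hle1 ω t htT) h2, h2⟩
      · rw [hB] at hBω
        obtain ⟨_, t, htT, h1⟩ := hBω
        exact ⟨t, le_of_lt (hT0.trans htT), h1, lt_of_le_of_lt (hle2 ω t htT.le) h1⟩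
  have hdisj : ∀ ω, ¬(ω ∈ A ∧ ω ∈ B) := by
    rintro ω ⟨hAω, hBω⟩
    rw [hA] at hAω
    rw [hB] at hBω
    obtain ⟨t, ht0, htT, h2⟩ := hAω
    exact absurd h2 (not_lt.mpr (hBω.1 t ht0 htT))
  refine ⟨hiff, hdisj, ?_⟩
  have hset : {ω | ∃ t, 0 ≤ t ∧ X1 ω t < 0 ∧ X2 ω t < 0} = A ∪ B := by
    ext ω
    simpa using hiff ω
  rw [hset, measure_union _ hBmeas]
  rw [Set.disjoint_left]
  intro ω hAω hBω
  exact hdisj ω ⟨hAω, hBω⟩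
end

section
/- (Lemma 4(i).) Under the stated assumptions, 0 < s1 < 1 and s2 < s1. Consequently the cones D1 = {(x1,x2) ∈ (0,∞)² : x1 > s1·x2} and D2 = {(x1,x2) ∈ (0,∞)² : x1 < s2·x2} are disjoint, and D1 and the intermediate cone D0 = {(x1,x2) ∈ (0,∞)² : s2·x2 < x1 < s1·x2} are nonempty. -/
/-!
With `c = p1 - p2` we have `κ1' = κ2' + c`, so `s1` and the second candidate for `s2` are
values of `a ↦ (a + c) / a`, which is decreasing on `(-∞, 0)`. Comparing derivatives of the strictly
convex `κ2` with its chords to the origin, through `(-γ2, 0)` and `(-γ1, c γ1)`, gives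
`κ2'(-γ1) < -c` and `κ2'(-γ1) < κ2'(-γ2) < 0`: the first puts `s1` in `(0, 1)`, the second puts
the other ratio below `s1`.
-/

open Set

lemma deriv_eq_deriv_add_of_forall_eq_add_mul {f g : ℝ → ℝ} {c θ : ℝ}
    (hfg : ∀ θ, f θ = g θ + c * θ) (hg : DifferentiableAt ℝ g θ) :
    deriv f θ = deriv g θ + c := by
  have h : HasDerivAt (fun θ => g θ + c * θ) (deriv g θ + c * 1) θ :=
    hg.hasDerivAt.add ((hasDerivAt_id' θ).const_mul c)
  rw [show f = fun θ => g θ + c * θ from funext hfg, h.deriv, mul_one]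

lemma StrictConvexOn.deriv_lt_div_of_neg {f : ℝ → ℝ} {x : ℝ}
    (hf : StrictConvexOn ℝ univ f) (hfx : DifferentiableAt ℝ f x) (hf0 : f 0 = 0) (hx : x < 0) :
    deriv f x < f x / x := by
  have h := hf.deriv_lt_slope (mem_univ x) (mem_univ 0) hx hfx
  rwa [slope_def_field, hf0, zero_sub, zero_sub, neg_div_neg_eq] at h

lemma strictAntiOn_add_div_self {c : ℝ} (hc : 0 < c) :
    StrictAntiOn (fun a : ℝ => (a + c) / a) (Iio 0) := by
  intro a (ha : a < 0) b (hb : b < 0) hab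
  have h : c * b⁻¹ < c * a⁻¹ := mul_lt_mul_of_pos_left ((inv_lt_inv_of_neg hb ha).2 hab) hc
  show (b + c) / b < (a + c) / a
  rw [add_div, add_div, div_self ha.ne, div_self hb.ne, div_eq_mul_inv c, div_eq_mul_inv c]
  linarith

lemma add_div_self_mem_Ioo {a c : ℝ} (hc : 0 < c) (ha : a < -c) :
    (a + c) / a ∈ Ioo 0 1 := by
  have ha0 : a < 0 := by linarith
  exact ⟨div_pos_of_neg_of_neg (by linarith) ha0, (div_lt_one_of_neg ha0).2 (by linarith)⟩

lemma disjoint_cones {s t : ℝ} (hts : t ≤ s) :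
    Disjoint {x : ℝ × ℝ | 0 < x.1 ∧ 0 < x.2 ∧ s * x.2 < x.1}
      {x : ℝ × ℝ | 0 < x.1 ∧ 0 < x.2 ∧ x.1 < t * x.2} := by
  rw [disjoint_left]
  rintro x ⟨-, hx2, hs⟩ ⟨-, -, ht⟩
  nlinarith

lemma cone_nonempty (s : ℝ) : {x : ℝ × ℝ | 0 < x.1 ∧ 0 < x.2 ∧ s * x.2 < x.1}.Nonempty :=
  ⟨(|s| + 1, 1), by positivity, one_pos, by linarith [le_abs_self s]⟩

lemma wedge_nonempty {s t : ℝ} (ht : 0 ≤ t) (hts : t < s) :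
    {x : ℝ × ℝ | 0 < x.1 ∧ 0 < x.2 ∧ t * x.2 < x.1 ∧ x.1 < s * x.2}.Nonempty :=
  ⟨((t + s) / 2, 1), by linarith, one_pos, by linarith, by linarith⟩

/-- Lemma 4(i): `0 < s1 < 1`, `s2 < s1`, the cones `D1` and `D2` are disjoint,
and `D1` and the intermediate cone `D0` are nonempty. -/
theorem cones_disjoint_nonempty
    (p1 p2 : ℝ) (hp : p2 < p1)
    (κ1 κ2 : ℝ → ℝ)
    (hκ2conv : StrictConvexOn ℝ Set.univ κ2) (hκ2diff : Differentiable ℝ κ2)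
    (hκ1 : ∀ θ, κ1 θ = κ2 θ + (p1 - p2) * θ)
    (hκ2zero : κ2 0 = 0)
    (γ1 γ2 : ℝ) (hγ2pos : 0 < γ2) (hγ : γ2 < γ1)
    (hγ1root : κ1 (-γ1) = 0) (hγ2root : κ2 (-γ2) = 0)
    (s1 s2 : ℝ)
    (hs1 : s1 = deriv κ1 (-γ1) / deriv κ2 (-γ1))
    (hs2 : s2 = max 0 (deriv κ1 (-γ2) / deriv κ2 (-γ2)))
    (D1 D2 D0 : Set (ℝ × ℝ))
    (hD1 : D1 = {x | 0 < x.1 ∧ 0 < x.2 ∧ s1 * x.2 < x.1})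
    (hD2 : D2 = {x | 0 < x.1 ∧ 0 < x.2 ∧ x.1 < s2 * x.2})
    (hD0 : D0 = {x | 0 < x.1 ∧ 0 < x.2 ∧ s2 * x.2 < x.1 ∧ x.1 < s1 * x.2}) :
    0 < s1 ∧ s1 < 1 ∧ s2 < s1 ∧ Disjoint D1 D2 ∧ D1.Nonempty ∧ D0.Nonempty := by
  have hc : 0 < p1 - p2 := sub_pos.2 hp
  have hγ1pos : 0 < γ1 := hγ2pos.trans hγ
  have hκ2γ1 : κ2 (-γ1) = (p1 - p2) * γ1 := by linarith [hκ1 (-γ1)]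
  have ha : deriv κ2 (-γ1) < -(p1 - p2) := by
    have h := hκ2conv.deriv_lt_div_of_neg (hκ2diff _) hκ2zero (neg_lt_zero.2 hγ1pos)
    rwa [hκ2γ1, div_neg, mul_div_cancel_right₀ _ hγ1pos.ne'] at h
  have hb : deriv κ2 (-γ2) < 0 := by
    have h := hκ2conv.deriv_lt_div_of_neg (hκ2diff _) hκ2zero (neg_lt_zero.2 hγ2pos)
    rwa [hγ2root, zero_div] at h
  have hab : deriv κ2 (-γ1) < deriv κ2 (-γ2) :=
    hκ2conv.strictMonoOn_deriv (fun x _ => hκ2diff x) (mem_univ _) (mem_univ _) (neg_lt_neg hγ)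
  rw [deriv_eq_deriv_add_of_forall_eq_add_mul hκ1 (hκ2diff _)] at hs1 hs2
  obtain ⟨hs1pos, hs1lt⟩ : s1 ∈ Ioo 0 1 := hs1 ▸ add_div_self_mem_Ioo hc ha
  have hs2s1 : s2 < s1 :=
    hs2 ▸ max_lt hs1pos (hs1 ▸ strictAntiOn_add_div_self hc (hab.trans hb) hb hab)
  subst hD1 hD2 hD0
  exact ⟨hs1pos, hs1lt, hs2s1, disjoint_cones hs2s1.le, cone_nonempty s1,
    wedge_nonempty (hs2 ▸ le_max_left _ _) hs2s1⟩
end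

section
/- (Lemma 4(ii): the secondary root γ3 and slope s3.) Under the stated assumptions, κ1(−γ2) < 0 and: (a) if κ1′(−γ2) > 0 (so s2 = 0), then there exists a unique γ3 ∈ (γ2, γ1) with κ1(−γ3) = κ1(−γ2), and this γ3 satisfies κ1′(−γ3) < 0 and κ2′(−γ3) < 0, so that s3 := κ1′(−γ3)/κ2′(−γ3) > 0; (b) if κ1′(−γ2) < 0, then for every s ∈ (γ2, γ1] one has κ1(−s) > κ1(−γ2), i.e. γ2 itself is the largest root in (0, γ1] of κ1(−s) = κ1(−γ2). -/
open Set Topology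

/-!
Write `θ = -γ`. The function `κ1` is strictly convex with `κ1 (-γ1) = 0 > κ1 (-γ2)`. If `κ1` is
increasing at `-γ2`, it dips below `κ1 (-γ2)` just to the left of `-γ2`, so by the intermediate
value theorem it takes the value `κ1 (-γ2)` again in `(-γ1, -γ2)`; strict convexity forbids a third
such point and forces `κ1' < 0` there, hence also `κ2' = κ1' - (p1 - p2) < 0`. If instead `κ1` is
decreasing at `-γ2`, strict convexity makes it strictly larger at every point to the left.
-/

section StrictConvex

variable {f : ℝ → ℝ} {S : Set ℝ} {x y z : ℝ}

lemma StrictConvexOn.lt_of_mem_Ioo_of_eq (hf : StrictConvexOn ℝ S f) (hx : x ∈ S) (hz : z ∈ S)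
    (hy : y ∈ Ioo x z) (h : f x = f z) : f y < f z := by
  have hxz : x < z := hy.1.trans hy.2
  simpa [h] using hf.lt_on_openSegment hx hz hxz.ne (by rwa [openSegment_eq_Ioo hxz])

lemma StrictConvexOn.deriv_neg_of_eq (hf : StrictConvexOn ℝ S f) (hx : x ∈ S) (hy : y ∈ S)
    (hxy : x < y) (hd : DifferentiableAt ℝ f x) (h : f x = f y) : deriv f x < 0 := by
  simpa [slope_def_field, h] using hf.deriv_lt_slope hx hy hxy hd

lemma StrictConvexOn.lt_of_deriv_nonpos (hf : StrictConvexOn ℝ S f) (hx : x ∈ S) (hy : y ∈ S)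
    (hxy : x < y) (hd : DifferentiableAt ℝ f y) (h : deriv f y ≤ 0) : f y < f x :=
  (slope_neg_iff_of_le hxy.le).1 ((hf.slope_lt_deriv hx hy hxy hd).trans_le h)

end StrictConvex

lemma HasDerivAt.exists_mem_Ioo_lt_of_pos {f : ℝ → ℝ} {f' a b : ℝ} (hf : HasDerivAt f f' a)
    (hf' : 0 < f') (hba : b < a) : ∃ x ∈ Ioo b a, f x < f a := by
  have hslope : ∀ᶠ x in 𝓝[<] a, 0 < slope f a x :=
    (hasDerivAt_iff_tendsto_slope_left_right.1 hf).1.eventually (eventually_gt_nhds hf')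
  obtain ⟨x, hx, hxI⟩ := (hslope.and (Ioo_mem_nhdsLT hba)).exists
  exact ⟨x, hxI, (slope_pos_iff_gt hxI.2).1 hx⟩

lemma StrictConvexOn.existsUnique_mem_Ioo_eq {f : ℝ → ℝ} {a b : ℝ}
    (hf : StrictConvexOn ℝ (Icc b a) f) (hc : ContinuousOn f (Icc b a))
    (hd : DifferentiableAt ℝ f a) (hba : b < a) (hfab : f a < f b) (hpos : 0 < deriv f a) :
    ∃! x, x ∈ Ioo b a ∧ f x = f a := by
  obtain ⟨θ, hθ, hθa⟩ := hd.hasDerivAt.exists_mem_Ioo_lt_of_pos hpos hba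
  obtain ⟨x, hx, hxa⟩ := intermediate_value_Ioo' hθ.1.le (hc.mono (Icc_subset_Icc_right hθ.2.le))
    ⟨hθa, hfab⟩
  have hxI : x ∈ Ioo b a := ⟨hx.1, hx.2.trans hθ.2⟩
  refine ⟨x, ⟨hxI, hxa⟩, fun y ⟨hy, hya⟩ => ?_⟩
  have ha : a ∈ Icc b a := right_mem_Icc.2 hba.le
  rcases lt_trichotomy y x with hyx | rfl | hxy
  · exact absurd hxa (hf.lt_of_mem_Ioo_of_eq (Ioo_subset_Icc_self hy) ha ⟨hyx, hxI.2⟩ hya).ne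
  · rfl
  · exact absurd hya (hf.lt_of_mem_Ioo_of_eq (Ioo_subset_Icc_self hxI) ha ⟨hxy, hy.2⟩ hxa).ne

theorem secondary_root_gamma3_general
    (p1 p2 : ℝ) (hp : p2 < p1)
    (κ1 κ2 : ℝ → ℝ)
    (hκ2conv : StrictConvexOn ℝ Set.univ κ2) (hκ2diff : Differentiable ℝ κ2)
    (hκ1 : ∀ θ, κ1 θ = κ2 θ + (p1 - p2) * θ)
    (γ1 γ2 : ℝ) (hγ2pos : 0 < γ2) (hγ : γ2 < γ1)
    (hγ1root : κ1 (-γ1) = 0) (hγ2root : κ2 (-γ2) = 0) :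
    κ1 (-γ2) < 0 ∧
    (0 < deriv κ1 (-γ2) →
      (∃! γ3, γ3 ∈ Set.Ioo γ2 γ1 ∧ κ1 (-γ3) = κ1 (-γ2)) ∧
      (∀ γ3, γ3 ∈ Set.Ioo γ2 γ1 → κ1 (-γ3) = κ1 (-γ2) →
        deriv κ1 (-γ3) < 0 ∧ deriv κ2 (-γ3) < 0 ∧
        0 < deriv κ1 (-γ3) / deriv κ2 (-γ3))) ∧
    (deriv κ1 (-γ2) < 0 →
      ∀ s ∈ Set.Ioc γ2 γ1, κ1 (-γ2) < κ1 (-s)) := by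
  have hc : 0 < p1 - p2 := sub_pos.2 hp
  have hκ1eq : κ1 = fun θ => κ2 θ + (p1 - p2) * θ := funext hκ1
  have hκ1diff : Differentiable ℝ κ1 := hκ1eq ▸ hκ2diff.add (differentiable_id.const_mul _)
  have hκ1conv : StrictConvexOn ℝ univ κ1 :=
    hκ1eq ▸ hκ2conv.add_convexOn ((convexOn_id convex_univ).smul hc.le)
  have hderiv (θ : ℝ) : deriv κ1 θ = deriv κ2 θ + (p1 - p2) := by
    rw [hκ1eq]
    exact ((hκ2diff θ).hasDerivAt.add ((hasDerivAt_id' θ).const_mul (p1 - p2))).deriv.trans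
      (by rw [mul_one])
  have hneg : κ1 (-γ2) < 0 := by rw [hκ1, hγ2root]; nlinarith
  refine ⟨hneg, fun hpos => ⟨?_, fun γ3 hγ3 heq => ?_⟩, fun hd s hs => ?_⟩
  · obtain ⟨θ, ⟨hθ, hθeq⟩, huniq⟩ := (hκ1conv.subset (subset_univ (Icc (-γ1) (-γ2)))
      (convex_Icc _ _)).existsUnique_mem_Ioo_eq hκ1diff.continuous.continuousOn (hκ1diff _)
        (neg_lt_neg hγ) (by rwa [hγ1root]) hpos
    refine ⟨-θ, ⟨⟨by linarith [hθ.2], by linarith [hθ.1]⟩, by rwa [neg_neg]⟩, ?_⟩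
    rintro γ ⟨hγ, hγeq⟩
    linarith [huniq (-γ) ⟨⟨by linarith [hγ.2], by linarith [hγ.1]⟩, hγeq⟩]
  · have h1 := hκ1conv.deriv_neg_of_eq trivial trivial (neg_lt_neg hγ3.1) (hκ1diff _) heq
    have h2 : deriv κ2 (-γ3) < 0 := by linarith [hderiv (-γ3)]
    exact ⟨h1, h2, div_pos_of_neg_of_neg h1 h2⟩
  · exact hκ1conv.lt_of_deriv_nonpos trivial trivial (neg_lt_neg hs.1) (hκ1diff _) hd.le

/-- Lemma 4(ii): the secondary root `γ3` and slope `s3`.  One has `κ1(-γ2) < 0`;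
if `κ1'(-γ2) > 0` there is a unique `γ3 ∈ (γ2, γ1)` with `κ1(-γ3) = κ1(-γ2)`,
and it satisfies `κ1'(-γ3) < 0`, `κ2'(-γ3) < 0` and `s3 > 0`;
if `κ1'(-γ2) < 0` then `κ1(-s) > κ1(-γ2)` for all `s ∈ (γ2, γ1]`. -/
theorem secondary_root_gamma3
    (p1 p2 : ℝ) (hp : p2 < p1)
    (κ1 κ2 : ℝ → ℝ)
    (hκ2conv : StrictConvexOn ℝ Set.univ κ2) (hκ2diff : Differentiable ℝ κ2)
    (hκ1 : ∀ θ, κ1 θ = κ2 θ + (p1 - p2) * θ)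
    (hκ2zero : κ2 0 = 0)
    (γ1 γ2 : ℝ) (hγ2pos : 0 < γ2) (hγ : γ2 < γ1)
    (hγ1root : κ1 (-γ1) = 0) (hγ2root : κ2 (-γ2) = 0) :
    κ1 (-γ2) < 0 ∧
    (0 < deriv κ1 (-γ2) →
      (∃! γ3, γ3 ∈ Set.Ioo γ2 γ1 ∧ κ1 (-γ3) = κ1 (-γ2)) ∧
      (∀ γ3, γ3 ∈ Set.Ioo γ2 γ1 → κ1 (-γ3) = κ1 (-γ2) →
        deriv κ1 (-γ3) < 0 ∧ deriv κ2 (-γ3) < 0 ∧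
        0 < deriv κ1 (-γ3) / deriv κ2 (-γ3))) ∧
    (deriv κ1 (-γ2) < 0 →
      ∀ s ∈ Set.Ioc γ2 γ1, κ1 (-γ2) < κ1 (-s)) :=
  secondary_root_gamma3_general p1 p2 hp κ1 κ2 hκ2conv hκ2diff hκ1 γ1 γ2 hγ2pos hγ hγ1root hγ2root
end

section
/- (Lemma 5: characterization of the asymptotic cones via the crossing time T.) For all x1, x2 > 0, with T := (x2 − x1)/(p1 − p2), T1 := x1/(−κ1′(−γ1)), T̃2 := x2/(−κ2′(−γ1)) and T2 := x2/(−κ2′(−γ2)), the following equivalences hold: (a) x1/x2 > s1 ⇔ T < T1 ⇔ T < T̃2; (b) x1/x2 < s2 ⇔ T2 < T (here one may equivalently use s2′ := κ1′(−γ2)/κ2′(−γ2) in place of s2, since x1/x2 > 0); consequently (c) s2 < x1/x2 < s1 ⇔ T1 < T < T2. -/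
set_option maxHeartbeats 1000000 in
/-- Lemma 5: characterization of the asymptotic cones via the crossing time `T`. -/
theorem cones_via_crossing_time
    (p1 p2 : ℝ) (hp : p2 < p1)
    (κ1 κ2 : ℝ → ℝ)
    (hκ2conv : StrictConvexOn ℝ Set.univ κ2) (hκ2diff : Differentiable ℝ κ2)
    (hκ1 : ∀ θ, κ1 θ = κ2 θ + (p1 - p2) * θ)
    (hκ2zero : κ2 0 = 0)
    (γ1 γ2 : ℝ) (hγ2pos : 0 < γ2) (hγ : γ2 < γ1)
    (hγ1root : κ1 (-γ1) = 0) (hγ2root : κ2 (-γ2) = 0)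
    (s1 s2 s2' : ℝ)
    (hs1 : s1 = deriv κ1 (-γ1) / deriv κ2 (-γ1))
    (hs2 : s2 = max 0 (deriv κ1 (-γ2) / deriv κ2 (-γ2)))
    (hs2' : s2' = deriv κ1 (-γ2) / deriv κ2 (-γ2))
    (x1 x2 : ℝ) (hx1 : 0 < x1) (hx2 : 0 < x2)
    (T T1 T2 T2tilde : ℝ)
    (hT : T = (x2 - x1) / (p1 - p2))
    (hT1 : T1 = x1 / (-deriv κ1 (-γ1)))
    (hT2tilde : T2tilde = x2 / (-deriv κ2 (-γ1)))
    (hT2 : T2 = x2 / (-deriv κ2 (-γ2))) :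
    ((s1 < x1 / x2 ↔ T < T1) ∧ (s1 < x1 / x2 ↔ T < T2tilde)) ∧
    ((x1 / x2 < s2 ↔ T2 < T) ∧ (x1 / x2 < s2 ↔ x1 / x2 < s2')) ∧
    ((s2 < x1 / x2 ∧ x1 / x2 < s1) ↔ (T1 < T ∧ T < T2)) := by
  have hq : (0:ℝ) < p1 - p2 := by linarith
  have hγ1pos : (0:ℝ) < γ1 := lt_trans hγ2pos hγ
  have hκ1fun : κ1 = fun θ => κ2 θ + (p1 - p2) * θ := funext hκ1
  have hderiv : ∀ x : ℝ, deriv κ1 x = deriv κ2 x + (p1 - p2) := by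
    intro x
    have h1 : HasDerivAt (fun θ => κ2 θ + (p1 - p2) * θ)
        (deriv κ2 x + (p1 - p2) * 1) x :=
      (hκ2diff x).hasDerivAt.add ((hasDerivAt_id x).const_mul (p1 - p2))
    rw [← hκ1fun] at h1
    simpa using h1.deriv
  have hκ2γ1 : κ2 (-γ1) = (p1 - p2) * γ1 := by
    have h := hκ1 (-γ1)
    rw [hγ1root] at h
    nlinarith [h]
  -- key derivative inequalities
  have hB : deriv κ2 (-γ1) < -(p1 - p2) := by
    have h := hκ2conv.deriv_lt_slope (Set.mem_univ (-γ1)) (Set.mem_univ 0)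
      (by linarith) (hκ2diff (-γ1))
    rw [slope_def_field, hκ2zero, hκ2γ1] at h
    have e : ((0:ℝ) - (p1 - p2) * γ1) / (0 - -γ1) = -(p1 - p2) := by
      rw [show (0:ℝ) - -γ1 = γ1 by ring]
      field_simp
      ring
    rw [e] at h
    exact h
  have hC : deriv κ2 (-γ2) < 0 := by
    have h := hκ2conv.deriv_lt_slope (Set.mem_univ (-γ2)) (Set.mem_univ 0)
      (by linarith) (hκ2diff (-γ2))
    simpa [slope_def_field, hκ2zero, hγ2root] using h
  have hBC : deriv κ2 (-γ1) < deriv κ2 (-γ2) := by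
    have h1 := hκ2conv.deriv_lt_slope (Set.mem_univ (-γ1)) (Set.mem_univ (-γ2))
      (by linarith) (hκ2diff (-γ1))
    have h2 := hκ2conv.slope_lt_deriv (Set.mem_univ (-γ1)) (Set.mem_univ (-γ2))
      (by linarith) (hκ2diff (-γ2))
    linarith
  set A := deriv κ1 (-γ1) with hAdef
  set B := deriv κ2 (-γ1) with hBdef
  set C := deriv κ2 (-γ2) with hCdef
  set D := deriv κ1 (-γ2) with hDdef
  have hAB : A = B + (p1 - p2) := hderiv (-γ1)
  have hDC : D = C + (p1 - p2) := hderiv (-γ2)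
  have hAneg : A < 0 := by linarith
  have hBneg : B < 0 := by linarith
  have hCneg : C < 0 := by linarith
  have hnA : (0:ℝ) < -A := by linarith
  have hnB : (0:ℝ) < -B := by linarith
  have hnC : (0:ℝ) < -C := by linarith
  have hs1' : s1 = (-A) / (-B) := by rw [hs1, neg_div_neg_eq]
  have hs2'' : s2' = (-D) / (-C) := by rw [hs2', neg_div_neg_eq]
  have hx1AB : x1 * A = x1 * B + x1 * (p1 - p2) := by rw [hAB]; ring
  have hx2AB : x2 * A = x2 * B + x2 * (p1 - p2) := by rw [hAB]; ring
  have hx1DC : x1 * D = x1 * C + x1 * (p1 - p2) := by rw [hDC]; ring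
  have hx2DC : x2 * D = x2 * C + x2 * (p1 - p2) := by rw [hDC]; ring
  have I1 : s1 < x1 / x2 ↔ T < T1 := by
    rw [hs1', hT, hT1, div_lt_div_iff₀ hnB hx2, div_lt_div_iff₀ hq hnA]
    constructor <;> intro h <;> linarith [hx1AB, hx2AB]
  have I1t : s1 < x1 / x2 ↔ T < T2tilde := by
    rw [hs1', hT, hT2tilde, div_lt_div_iff₀ hnB hx2, div_lt_div_iff₀ hq hnB]
    constructor <;> intro h <;> linarith [hx1AB, hx2AB]
  have I1' : x1 / x2 < s1 ↔ T1 < T := by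
    rw [hs1', hT, hT1, div_lt_div_iff₀ hx2 hnB, div_lt_div_iff₀ hnA hq]
    constructor <;> intro h <;> linarith [hx1AB, hx2AB]
  have I2 : s2' < x1 / x2 ↔ T < T2 := by
    rw [hs2'', hT, hT2, div_lt_div_iff₀ hnC hx2, div_lt_div_iff₀ hq hnC]
    constructor <;> intro h <;> linarith [hx1DC, hx2DC]
  have I2' : x1 / x2 < s2' ↔ T2 < T := by
    rw [hs2'', hT, hT2, div_lt_div_iff₀ hx2 hnC, div_lt_div_iff₀ hnC hq]
    constructor <;> intro h <;> linarith [hx1DC, hx2DC]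
  have hr : 0 < x1 / x2 := div_pos hx1 hx2
  have hmaxlt : x1 / x2 < s2 ↔ x1 / x2 < s2' := by
    rw [hs2, ← hs2', lt_max_iff]
    constructor
    · rintro (h | h)
      · exact absurd h (not_lt.2 hr.le)
      · exact h
    · exact Or.inr
  have hltmax : s2 < x1 / x2 ↔ s2' < x1 / x2 := by
    rw [hs2, ← hs2', max_lt_iff]
    exact ⟨fun h => h.2, fun h => ⟨hr, h⟩⟩
  refine ⟨⟨I1, I1t⟩, ⟨hmaxlt.trans I2', hmaxlt⟩, ?_⟩
  rw [hltmax]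
  constructor
  · rintro ⟨h1, h2⟩
    exact ⟨I1'.mp h2, I2.mp h1⟩
  · rintro ⟨h1, h2⟩
    exact ⟨I2.mpr h2, I1'.mpr h1⟩
end

section
/- (Lemma 6(i), inequality part.) For every a ∈ (0,1), with v_a := (p1 − p2)/(1 − a), one has κ2*(−v_a) ≥ max(a·γ1, γ2)·v_a; moreover the inequality against a·γ1·v_a is strict unless a = s1 := κ1′(−γ1)/κ2′(−γ1), and the inequality against γ2·v_a is strict unless a = s2′ := κ1′(−γ2)/κ2′(−γ2). In particular γ(a) := κ2*(−v_a)/v_a satisfies γ(a) > max(a·γ1, γ2) for all a ∈ (0,1) with a ∉ {s1, s2′}. -/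
/-!
Evaluating the supremum at `θ = -γ1` and `θ = -γ2` gives `a·γ1·v_a` and `γ2·v_a`, since
`κ2(-γ1) = (p1 - p2)·γ1 = (1 - a)·v_a·γ1` and `κ2(-γ2) = 0`. By Fermat's theorem the supremum
of `θ ↦ -v_a·θ - κ2 θ` strictly exceeds its value at any point where `κ2' ≠ -v_a`, and
`κ2'(θ) = -v_a` forces `κ1'(θ) / κ2'(θ) = (-v_a + (1 - a)·v_a) / (-v_a) = a`.
-/

open Filter

theorem coe_lt_iSup_of_hasDerivAt_ne_zero {g : ℝ → ℝ} {x d : ℝ} (hg : HasDerivAt g d x)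
    (hd : d ≠ 0) : ((g x : ℝ) : EReal) < ⨆ y, ((g y : ℝ) : EReal) := by
  obtain ⟨y, hy⟩ : ∃ y, g x < g y := by
    by_contra! hmax
    exact hd (IsLocalMax.hasDerivAt_eq_zero (Eventually.of_forall hmax) hg)
  exact (EReal.coe_lt_coe_iff.mpr hy).trans_le (le_iSup (fun y => ((g y : ℝ) : EReal)) y)

theorem coe_lt_iSup_mul_sub_of_deriv_ne {κ : ℝ → ℝ} {s x : ℝ} (hκ : DifferentiableAt ℝ κ x)
    (hs : deriv κ x ≠ s) :
    ((s * x - κ x : ℝ) : EReal) < ⨆ θ : ℝ, ((s * θ - κ θ : ℝ) : EReal) :=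
  coe_lt_iSup_of_hasDerivAt_ne_zero (g := fun θ => s * θ - κ θ)
    (((hasDerivAt_id x).const_mul s).sub hκ.hasDerivAt) (by simpa [sub_eq_zero, eq_comm] using hs)

theorem EReal.coe_lt_mul_coe_inv {c v : ℝ} {S : EReal} (hv : 0 < v)
    (h : ((c * v : ℝ) : EReal) < S) : (c : EReal) < S * ((v⁻¹ : ℝ) : EReal) := by
  rw [EReal.coe_inv, ← div_eq_mul_inv,
    EReal.lt_div_iff (by exact_mod_cast hv) (EReal.coe_ne_top v)]
  exact_mod_cast h

theorem gamma_a_strict_bound_general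
    (p1 p2 : ℝ) (hp : p2 < p1)
    (κ1 κ2 : ℝ → ℝ)
    (hκ2diff : Differentiable ℝ κ2)
    (hκ1 : ∀ θ, κ1 θ = κ2 θ + (p1 - p2) * θ)
    (γ1 γ2 : ℝ)
    (hγ1root : κ1 (-γ1) = 0) (hγ2root : κ2 (-γ2) = 0)
    (s1 s2' : ℝ)
    (hs1 : s1 = deriv κ1 (-γ1) / deriv κ2 (-γ1))
    (hs2' : s2' = deriv κ1 (-γ2) / deriv κ2 (-γ2))
    (a : ℝ) (ha : a ∈ Set.Ioo (0 : ℝ) 1)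
    (va : ℝ) (hva : va = (p1 - p2) / (1 - a)) :
    ((max (a * γ1) γ2 * va : ℝ) : EReal) ≤ ⨆ θ : ℝ, ((-va * θ - κ2 θ : ℝ) : EReal) ∧
    (a ≠ s1 →
      ((a * γ1 * va : ℝ) : EReal) < ⨆ θ : ℝ, ((-va * θ - κ2 θ : ℝ) : EReal)) ∧
    (a ≠ s2' →
      ((γ2 * va : ℝ) : EReal) < ⨆ θ : ℝ, ((-va * θ - κ2 θ : ℝ) : EReal)) ∧
    (a ≠ s1 → a ≠ s2' →
      ((max (a * γ1) γ2 : ℝ) : EReal)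
        < (⨆ θ : ℝ, ((-va * θ - κ2 θ : ℝ) : EReal)) * ((va⁻¹ : ℝ) : EReal)) := by
  have hva_pos : 0 < va := hva ▸ div_pos (sub_pos.2 hp) (sub_pos.2 ha.2)
  have hp_eq : p1 - p2 = (1 - a) * va := by
    rw [hva]
    field_simp [(sub_pos.2 ha.2).ne']
  have hval1 : -va * -γ1 - κ2 (-γ1) = a * γ1 * va := by
    linear_combination hκ1 (-γ1) - hγ1root - γ1 * hp_eq
  have hval2 : -va * -γ2 - κ2 (-γ2) = γ2 * va := by rw [hγ2root]; ring
  have hderiv1 (x : ℝ) : deriv κ1 x = deriv κ2 x + (p1 - p2) := by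
    rw [funext hκ1]
    exact ((hκ2diff x).hasDerivAt.add ((hasDerivAt_id x).const_mul (p1 - p2))).deriv.trans
      (by ring)
  have hderiv_ne (x : ℝ) (hne : a ≠ deriv κ1 x / deriv κ2 x) : deriv κ2 x ≠ -va := fun hx => by
    apply hne
    rw [hderiv1, hx, hp_eq]
    field_simp
    ring
  set S := ⨆ θ : ℝ, ((-va * θ - κ2 θ : ℝ) : EReal)
  have hle (θ : ℝ) : ((-va * θ - κ2 θ : ℝ) : EReal) ≤ S :=
    le_iSup (fun θ : ℝ => ((-va * θ - κ2 θ : ℝ) : EReal)) θ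
  have hlt1 (h : a ≠ s1) : ((a * γ1 * va : ℝ) : EReal) < S :=
    hval1 ▸ coe_lt_iSup_mul_sub_of_deriv_ne (hκ2diff _) (hderiv_ne _ (hs1 ▸ h))
  have hlt2 (h : a ≠ s2') : ((γ2 * va : ℝ) : EReal) < S :=
    hval2 ▸ coe_lt_iSup_mul_sub_of_deriv_ne (hκ2diff _) (hderiv_ne _ (hs2' ▸ h))
  have hmax_mul : ((max (a * γ1) γ2 * va : ℝ) : EReal) = max ↑(a * γ1 * va) ↑(γ2 * va) := by
    rw [max_mul_of_nonneg _ _ hva_pos.le, EReal.coe_strictMono.monotone.map_max]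
  refine ⟨hmax_mul ▸ max_le (hval1 ▸ hle _) (hval2 ▸ hle _), hlt1, hlt2, fun h1 h2 => ?_⟩
  exact EReal.coe_lt_mul_coe_inv hva_pos (hmax_mul ▸ max_lt (hlt1 h1) (hlt2 h2))

/-- Lemma 6(i), inequality part: `κ2*(-v_a) ≥ max(a·γ1, γ2)·v_a` in `ℝ ∪ {+∞}`
(modelled by `EReal`), strictly against `a·γ1·v_a` unless `a = s1` and strictly
against `γ2·v_a` unless `a = s2'`; in particular `γ(a) = κ2*(-v_a)/v_a`
(expressed as multiplication by `v_a⁻¹`) satisfies `γ(a) > max(a·γ1, γ2)`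
whenever `a ∉ {s1, s2'}`. -/
theorem gamma_a_strict_bound
    (p1 p2 : ℝ) (hp : p2 < p1)
    (κ1 κ2 : ℝ → ℝ)
    (hκ2conv : StrictConvexOn ℝ Set.univ κ2) (hκ2diff : Differentiable ℝ κ2)
    (hκ1 : ∀ θ, κ1 θ = κ2 θ + (p1 - p2) * θ)
    (hκ2zero : κ2 0 = 0)
    (γ1 γ2 : ℝ) (hγ2pos : 0 < γ2) (hγ : γ2 < γ1)
    (hγ1root : κ1 (-γ1) = 0) (hγ2root : κ2 (-γ2) = 0)
    (s1 s2' : ℝ)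
    (hs1 : s1 = deriv κ1 (-γ1) / deriv κ2 (-γ1))
    (hs2' : s2' = deriv κ1 (-γ2) / deriv κ2 (-γ2))
    (a : ℝ) (ha : a ∈ Set.Ioo (0 : ℝ) 1)
    (va : ℝ) (hva : va = (p1 - p2) / (1 - a)) :
    ((max (a * γ1) γ2 * va : ℝ) : EReal) ≤ ⨆ θ : ℝ, ((-va * θ - κ2 θ : ℝ) : EReal) ∧
    (a ≠ s1 →
      ((a * γ1 * va : ℝ) : EReal) < ⨆ θ : ℝ, ((-va * θ - κ2 θ : ℝ) : EReal)) ∧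
    (a ≠ s2' →
      ((γ2 * va : ℝ) : EReal) < ⨆ θ : ℝ, ((-va * θ - κ2 θ : ℝ) : EReal)) ∧
    (a ≠ s1 → a ≠ s2' →
      ((max (a * γ1) γ2 : ℝ) : EReal)
        < (⨆ θ : ℝ, ((-va * θ - κ2 θ : ℝ) : EReal)) * ((va⁻¹ : ℝ) : EReal)) :=
  gamma_a_strict_bound_general p1 p2 hp κ1 κ2 hκ2diff hκ1 γ1 γ2 hγ1root hγ2root s1 s2' hs1 hs2' a ha
    va hva
end

section
/- (Proposition 4: the supremum of a linear functional over the zero-level set of the two-dimensional cumulant, the identity established in its proof.) Let x1, x2 < 0 with a := x1/x2 ∈ (0,1), and set v_a := (p1 − p2)/(1 − a) > 0. Then sup over all (θ1, θ2) ∈ ℝ² with κ(θ1, θ2) = 0 of (θ1·x1 + θ2·x2) equals (|x2|/v_a)·κ2*(−v_a), as an identity in ℝ ∪ {+∞}. (Indeed, the zero-level set {κ = 0} is exactly the set of points (−κ2(η)/(p1 − p2), η + κ2(η)/(p1 − p2)) for η ∈ ℝ, and at such a point θ1·x1 + θ2·x2 = (|x2|/v_a)·(−v_a·η − κ2(η)).)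 -/
lemma ereal_coe_mul_iSup (c : ℝ) (hc : 0 < c) (g : ℝ → ℝ) :
    (⨆ η : ℝ, ((c * g η : ℝ) : EReal)) = (c : EReal) * ⨆ η : ℝ, ((g η : ℝ) : EReal) := by
  have hc0 : (0 : EReal) < (c : EReal) := by exact_mod_cast hc
  have hct : (c : EReal) ≠ ⊤ := EReal.coe_ne_top c
  apply le_antisymm
  · refine iSup_le fun η => ?_
    rw [EReal.coe_mul]
    exact mul_le_mul_of_nonneg_left (le_iSup (fun η : ℝ => ((g η : ℝ) : EReal)) η) hc0.le
  · rw [EReal.mul_comm, ← EReal.le_div_iff_mul_le hc0 hct]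
    refine iSup_le fun η => ?_
    rw [EReal.le_div_iff_mul_le hc0 hct, mul_comm, ← EReal.coe_mul]
    exact le_iSup (fun η : ℝ => ((c * g η : ℝ) : EReal)) η

/-- Proposition 4 (identity from its proof): the supremum of the linear functional
`θ ↦ θ1·x1 + θ2·x2` over the zero-level set of the two-dimensional cumulant
`κ(θ1,θ2) = κ2(θ1+θ2) + (p1-p2)·θ1` equals `(|x2|/v_a)·κ2*(-v_a)`, as an identity
in `ℝ ∪ {+∞}` (modelled by `EReal`); moreover the zero-level set is exactly the
curve `η ↦ (-κ2(η)/(p1-p2), η + κ2(η)/(p1-p2))`. -/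
theorem sup_over_zero_level_set
    (p1 p2 : ℝ) (hp : p2 < p1) (κ2 : ℝ → ℝ)
    (x1 x2 : ℝ) (hx1 : x1 < 0) (hx2 : x2 < 0)
    (a : ℝ) (ha : a = x1 / x2) (haI : a ∈ Set.Ioo (0 : ℝ) 1)
    (va : ℝ) (hva : va = (p1 - p2) / (1 - a)) :
    {θ : ℝ × ℝ | κ2 (θ.1 + θ.2) + (p1 - p2) * θ.1 = 0}
      = Set.range (fun η : ℝ =>
          (-κ2 η / (p1 - p2), η + κ2 η / (p1 - p2))) ∧
    (⨆ θ ∈ {θ : ℝ × ℝ | κ2 (θ.1 + θ.2) + (p1 - p2) * θ.1 = 0},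
        ((θ.1 * x1 + θ.2 * x2 : ℝ) : EReal))
      = ((|x2| / va : ℝ) : EReal) * ⨆ η : ℝ, ((-va * η - κ2 η : ℝ) : EReal) := by
  have hd : p1 - p2 ≠ 0 := sub_ne_zero.2 hp.ne'
  have hd' : (0:ℝ) < p1 - p2 := sub_pos.2 hp
  have hx2' : x2 ≠ 0 := hx2.ne
  have h1a : (0:ℝ) < 1 - a := sub_pos.2 haI.2
  have hva' : (0:ℝ) < va := by rw [hva]; positivity
  have hseteq : {θ : ℝ × ℝ | κ2 (θ.1 + θ.2) + (p1 - p2) * θ.1 = 0}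
      = Set.range (fun η : ℝ => (-κ2 η / (p1 - p2), η + κ2 η / (p1 - p2))) := by
    ext ⟨t1, t2⟩
    simp only [Set.mem_setOf_eq, Set.mem_range, Prod.mk.injEq]
    constructor
    · intro h
      refine ⟨t1 + t2, ?_, ?_⟩
      · field_simp
        linarith
      · field_simp
        ring_nf
        nlinarith [h]
    · rintro ⟨η, h1, h2⟩
      have : t1 + t2 = η := by rw [← h1, ← h2]; ring
      rw [this, ← h1]
      field_simp
      ring
  refine ⟨hseteq, ?_⟩
  rw [hseteq, iSup_range]
  have hc : (0:ℝ) < |x2| / va := div_pos (abs_pos.2 hx2') hva'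
  have key : ∀ η : ℝ, (-κ2 η / (p1 - p2)) * x1 + (η + κ2 η / (p1 - p2)) * x2
      = (|x2| / va) * (-va * η - κ2 η) := by
    intro η
    have h1a' : (1:ℝ) - a ≠ 0 := h1a.ne'
    have hax2 : a * x2 = x1 := by rw [ha]; field_simp
    rw [abs_of_neg hx2, hva, ← hax2]
    field_simp
    ring
  simp only [key]
  exact ereal_coe_mul_iSup _ hc _
end
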